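/- Exact state preparation: for N = 2^L and any unit-norm c ∈ ℂ^N, choosing split angles α_{ℓ,i} = atan2(r_{ℓ+1,2i}, r_{ℓ+1,2i−1}) (set to 0 when r_{ℓ,i} = 0) from the subtree norms of c, and output phases ϑ_n = arg c_n − (π/2) w_n (arbitrary when c_n = 0), the split-then-phase network satisfies diag(e^{iϑ₁},…,e^{iϑ_N}) · V_mag(α) · e₁ = c. -/

import Mathlib

/-!
Read `V_mag e₁` from the root down. The splitter at node `(ℓ, i)` sends the amplitude on the
node's leftmost leaf to its two children in the ratio `cos α : i sin α`, and the choice of `α`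
makes these `r_{ℓ+1,2i−1}` and `i · r_{ℓ+1,2i}`. Hence after `t` layers the leftmost leaf of
node `k` of level `t + 1` carries `i ^ w_k · r_{t+1,k+1}`, every descent to a right child adding
one factor `i` and one binary digit `1` to `k`; all other entries vanish. After `L` layers
entry `n` is `i ^ w_n · |c_n|`, which the output phase `e^{i arg c_n} · i ^ (−w_n)` turns into
`c_n`. The splitters of a layer act on disjoint pairs of coordinates, so a layer acts
blockwise.
-/

open Matrix Complex

/-- Embedded 2×2 splitter: identity on `ℂ^N` except on the (0-based) rows/columns
`{m, n}`, where the principal 2×2 block is `[[cos α, i sin α], [i sin α, cos α]]`. -/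
noncomputable def UsubN (N m n : ℕ) (α : ℝ) : Matrix (Fin N) (Fin N) ℂ :=
  Matrix.of fun u v =>
    if ((u : ℕ) = m ∧ (v : ℕ) = m) ∨ ((u : ℕ) = n ∧ (v : ℕ) = n) then (Real.cos α : ℂ)
    else if ((u : ℕ) = m ∧ (v : ℕ) = n) ∨ ((u : ℕ) = n ∧ (v : ℕ) = m) then
      Complex.I * Real.sin α
    else if u = v then 1 else 0

/-- 0-based entry index of node `(ℓ, i)` (with 1-based `ℓ, i`):
`p(ℓ,i) − 1 = (i−1)·2^{L−ℓ+1}`. -/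
def pIdx (L ℓ i : ℕ) : ℕ := (i - 1) * 2 ^ (L + 1 - ℓ)

/-- 0-based split-partner index of node `(ℓ, i)`: `q(ℓ,i) − 1 = p(ℓ,i) − 1 + 2^{L−ℓ}`. -/
def qIdx (L ℓ i : ℕ) : ℕ := pIdx L ℓ i + 2 ^ (L - ℓ)

/-- Layer matrix `U_ℓ`: the (commuting) product over `i = 1,…,2^{ℓ−1}` of the embedded
splitters `U_{p(ℓ,i), q(ℓ,i)}(α_{ℓ,i})`. -/
noncomputable def layerU (L : ℕ) (α : ℕ → ℕ → ℝ) (ℓ : ℕ) :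
    Matrix (Fin (2 ^ L)) (Fin (2 ^ L)) ℂ :=
  (List.ofFn fun i : Fin (2 ^ (ℓ - 1)) =>
    UsubN (2 ^ L) (pIdx L ℓ ((i : ℕ) + 1)) (qIdx L ℓ ((i : ℕ) + 1)) (α ℓ ((i : ℕ) + 1))).prod

/-- Magnitude-tree unitary `V_mag(α) = U_L · U_{L−1} ⋯ U_1`. -/
noncomputable def Vmag (L : ℕ) (α : ℕ → ℕ → ℝ) :
    Matrix (Fin (2 ^ L)) (Fin (2 ^ L)) ℂ :=
  (List.ofFn fun ℓ : Fin L => layerU L α (L - (ℓ : ℕ))).prod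

/-- First standard basis vector `e₁` of `ℂ^N` (0-based index `0`). -/
def e1 (N : ℕ) : Fin N → ℂ := fun j => if (j : ℕ) = 0 then 1 else 0

/-- `atan2 y x` for `x, y ≥ 0` (angle in `[0, π/2]`), via the complex argument. -/
noncomputable def atan2 (y x : ℝ) : ℝ := Complex.arg ((x : ℂ) + (y : ℂ) * Complex.I)

/-- Subtree norm `r_{ℓ,i}` of `c ∈ ℂ^{2^L}` (0-based entries) over the contiguous
dyadic block of 0-based indices `[(i−1)·2^{L+1−ℓ}, i·2^{L+1−ℓ})` (1-based `ℓ, i`). -/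
noncomputable def rnorm (L : ℕ) (c : Fin (2 ^ L) → ℂ) (ℓ i : ℕ) : ℝ :=
  Real.sqrt (∑ n : Fin (2 ^ L),
    if (i - 1) * 2 ^ (L + 1 - ℓ) ≤ (n : ℕ) ∧ (n : ℕ) < i * 2 ^ (L + 1 - ℓ)
    then ‖c n‖ ^ 2 else 0)

/-- Split-programming rule: `α_{ℓ,i} = atan2(r_{ℓ+1,2i}, r_{ℓ+1,2i−1})`
(set to `0` when `r_{ℓ,i} = 0`). -/
noncomputable def splitAngle (L : ℕ) (c : Fin (2 ^ L) → ℂ) (ℓ i : ℕ) : ℝ :=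
  if rnorm L c ℓ i = 0 then 0
  else atan2 (rnorm L c (ℓ + 1) (2 * i)) (rnorm L c (ℓ + 1) (2 * i - 1))

/-- Output phase-bank rule: `ϑ_n = arg c_n − (π/2)·w_n`, where `w_n` is the Hamming
weight of the binary expansion of `n − 1` (0-based index `n`). -/
noncomputable def phaseChoice (L : ℕ) (c : Fin (2 ^ L) → ℂ) (n : Fin (2 ^ L)) : ℝ :=
  (c n).arg - Real.pi / 2 * ((Nat.digits 2 (n : ℕ)).sum : ℝ)

namespace Matrix

variable {ι n R : Type*} [Fintype n] [DecidableEq n] [Semiring R]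

def ActsLocallyOn (M : Matrix n n R) (S : Set n) : Prop :=
  (∀ v u, u ∉ S → (M *ᵥ v) u = v u) ∧ ∀ v w, Set.EqOn v w S → Set.EqOn (M *ᵥ v) (M *ᵥ w) S

theorem ActsLocallyOn.list_prod_mulVec {l : List ι} {M : ι → Matrix n n R} {S : ι → Set n}
    (hM : ∀ i ∈ l, (M i).ActsLocallyOn (S i)) (hS : l.Pairwise fun i j => Disjoint (S i) (S j))
    (v : n → R) :
    (∀ u, (∀ i ∈ l, u ∉ S i) → ((l.map M).prod *ᵥ v) u = v u) ∧
      ∀ i ∈ l, Set.EqOn ((l.map M).prod *ᵥ v) (M i *ᵥ v) (S i) := by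
  induction l with
  | nil => exact ⟨fun u _ => by simp, by simp⟩
  | cons a l ih =>
    rw [List.pairwise_cons] at hS
    obtain ⟨hfix, hblock⟩ := ih (fun i hi => hM i (List.mem_cons_of_mem a hi)) hS.2
    have hMa := hM a List.mem_cons_self
    have hw : Set.EqOn ((l.map M).prod *ᵥ v) v (S a) := fun u hu =>
      hfix u fun i hi hui => Set.disjoint_left.1 (hS.1 i hi) hu hui
    simp only [List.map_cons, List.prod_cons, ← Matrix.mulVec_mulVec]
    refine ⟨fun u hu => ?_, fun i hi u hui => ?_⟩
    · rw [hMa.1 _ u (hu a List.mem_cons_self), hfix u fun i hi => hu i (List.mem_cons_of_mem a hi)]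
    · rcases List.mem_cons.1 hi with rfl | hi
      · exact hMa.2 _ v hw hui
      · rw [hMa.1 _ u (Set.disjoint_right.1 (hS.1 i hi) hui), hblock i hi hui]

end Matrix

theorem UsubN_actsLocallyOn (N m n : ℕ) (α : ℝ) :
    (UsubN N m n α).ActsLocallyOn {u | (u : ℕ) = m ∨ (u : ℕ) = n} := by
  refine ⟨fun v u hu => ?_, fun v w hvw u hu => ?_⟩
  · obtain ⟨hum, hun⟩ : (u : ℕ) ≠ m ∧ (u : ℕ) ≠ n := not_or.1 hu
    simp [Matrix.mulVec, dotProduct, UsubN, hum, hun]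
  · simp only [Matrix.mulVec, dotProduct]
    refine Finset.sum_congr rfl fun x _ => ?_
    by_cases hx : (x : ℕ) = m ∨ (x : ℕ) = n
    · rw [hvw hx]
    · have hux : u ≠ x := by rintro rfl; exact hx hu
      obtain ⟨hxm, hxn⟩ := not_or.1 hx
      simp [UsubN, hux, hxm, hxn]

theorem UsubN_mulVec_apply_left {N m n : ℕ} (hmn : m ≠ n) (α : ℝ) (v : Fin N → ℂ)
    {u w : Fin N} (hu : (u : ℕ) = m) (hw : (w : ℕ) = n) :
    (UsubN N m n α *ᵥ v) u = Real.cos α * v u + I * Real.sin α * v w := by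
  subst hu hw
  have huw : u ≠ w := fun h => hmn (congrArg Fin.val h)
  rw [Matrix.mulVec, dotProduct, Fintype.sum_eq_add u w huw fun x hx => ?_]
  · simp [UsubN, hmn, Ne.symm hmn]
  · simp [UsubN, hx.1, hx.2, Fin.val_inj, Ne.symm hx.1]

theorem UsubN_mulVec_apply_right {N m n : ℕ} (hmn : m ≠ n) (α : ℝ) (v : Fin N → ℂ)
    {u w : Fin N} (hu : (u : ℕ) = n) (hw : (w : ℕ) = m) :
    (UsubN N m n α *ᵥ v) u = I * Real.sin α * v w + Real.cos α * v u := by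
  subst hu hw
  have hwu : w ≠ u := fun h => hmn (congrArg Fin.val h)
  rw [Matrix.mulVec, dotProduct, Fintype.sum_eq_add w u hwu fun x hx => ?_]
  · simp [UsubN, hmn, Ne.symm hmn]
  · simp [UsubN, hx.1, hx.2, Fin.val_inj, Ne.symm hx.2]

theorem pIdx_succ (L ℓ j : ℕ) : pIdx L ℓ (j + 1) = j * 2 ^ (L + 1 - ℓ) := by
  simp [pIdx]

theorem qIdx_succ (L ℓ j : ℕ) : qIdx L ℓ (j + 1) = j * 2 ^ (L + 1 - ℓ) + 2 ^ (L - ℓ) := by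
  rw [qIdx, pIdx_succ]

theorem two_pow_add_one_sub {L ℓ : ℕ} (hℓ : ℓ ≤ L) : 2 ^ (L + 1 - ℓ) = 2 * 2 ^ (L - ℓ) := by
  rw [Nat.sub_add_comm hℓ, pow_succ']

theorem two_pow_sub_one_mul_two_pow {L ℓ : ℕ} (h1 : 1 ≤ ℓ) (h2 : ℓ ≤ L) :
    2 ^ (ℓ - 1) * 2 ^ (L + 1 - ℓ) = 2 ^ L := by
  rw [← pow_add]; congr 1; omega

theorem pIdx_lt_qIdx (L ℓ i : ℕ) : pIdx L ℓ i < qIdx L ℓ i :=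
  Nat.lt_add_of_pos_right (by positivity)

theorem two_pow_dvd_pIdx {L ℓ : ℕ} (hℓ : ℓ ≤ L) (i : ℕ) : 2 ^ (L - ℓ) ∣ pIdx L ℓ i := by
  rw [pIdx, two_pow_add_one_sub hℓ]
  exact Dvd.dvd.mul_left (dvd_mul_left _ _) _

theorem two_pow_dvd_qIdx {L ℓ : ℕ} (hℓ : ℓ ≤ L) (i : ℕ) : 2 ^ (L - ℓ) ∣ qIdx L ℓ i :=
  dvd_add (two_pow_dvd_pIdx hℓ i) dvd_rfl

theorem qIdx_lt_two_pow {L ℓ j : ℕ} (h1 : 1 ≤ ℓ) (h2 : ℓ ≤ L) (hj : j < 2 ^ (ℓ - 1)) :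
    qIdx L ℓ (j + 1) < 2 ^ L := by
  have hN := two_pow_sub_one_mul_two_pow h1 h2
  have hblock := Nat.mul_le_mul_right (2 ^ (L + 1 - ℓ)) (Nat.succ_le_of_lt hj)
  rw [two_pow_add_one_sub h2] at hN hblock
  rw [qIdx_succ, two_pow_add_one_sub h2]
  nlinarith [Nat.two_pow_pos (L - ℓ)]

theorem div_eq_of_eq_mul_or_eq_mul_add {u j s : ℕ} (hs : 0 < s)
    (hu : u = j * (2 * s) ∨ u = j * (2 * s) + s) : u / (2 * s) = j := by
  refine Nat.div_eq_of_lt_le ?_ ?_ <;> rcases hu with rfl | rfl <;> nlinarith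

theorem div_two_pow_lt {L ℓ : ℕ} (h1 : 1 ≤ ℓ) (h2 : ℓ ≤ L) (u : Fin (2 ^ L)) :
    (u : ℕ) / 2 ^ (L + 1 - ℓ) < 2 ^ (ℓ - 1) := by
  refine Nat.div_lt_of_lt_mul ?_
  rw [mul_comm, two_pow_sub_one_mul_two_pow h1 h2]
  exact u.isLt

theorem layerU_mulVec_apply {L ℓ : ℕ} (h1 : 1 ≤ ℓ) (h2 : ℓ ≤ L) (α : ℕ → ℕ → ℝ)
    (v : Fin (2 ^ L) → ℂ) {u : Fin (2 ^ L)} {j : ℕ} (hj : (u : ℕ) / 2 ^ (L + 1 - ℓ) = j) :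
    (layerU L α ℓ *ᵥ v) u =
      (UsubN (2 ^ L) (pIdx L ℓ (j + 1)) (qIdx L ℓ (j + 1)) (α ℓ (j + 1)) *ᵥ v) u := by
  let S : Fin (2 ^ (ℓ - 1)) → Set (Fin (2 ^ L)) := fun i =>
    {u | (u : ℕ) = pIdx L ℓ (i + 1) ∨ (u : ℕ) = qIdx L ℓ (i + 1)}
  have hblock : ∀ i u, u ∈ S i → (u : ℕ) / 2 ^ (L + 1 - ℓ) = i := fun i u hu => by
    have hu : (u : ℕ) = pIdx L ℓ (i + 1) ∨ (u : ℕ) = qIdx L ℓ (i + 1) := hu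
    rw [pIdx_succ, qIdx_succ, two_pow_add_one_sub h2] at hu
    rw [two_pow_add_one_sub h2]
    exact div_eq_of_eq_mul_or_eq_mul_add (by positivity) hu
  have hlocal := Matrix.ActsLocallyOn.list_prod_mulVec (l := List.finRange _) (S := S)
    (fun i _ => UsubN_actsLocallyOn _ _ _ (α ℓ (i + 1)))
    ((List.pairwise_lt_finRange _).imp fun {i i'} hii' => Set.disjoint_left.2 fun u hu hu' =>
      hii'.ne (Fin.ext ((hblock i u hu).symm.trans (hblock i' u hu')))) v
  have hjlt : j < 2 ^ (ℓ - 1) := hj ▸ div_two_pow_lt h1 h2 u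
  rw [layerU, List.ofFn_eq_map]
  by_cases hu : u ∈ S ⟨j, hjlt⟩
  · exact hlocal.2 ⟨j, hjlt⟩ (List.mem_finRange _) hu
  · have hout : ∀ i ∈ List.finRange _, u ∉ S i := fun i _ hi => hu <| by
      rwa [show (⟨j, hjlt⟩ : Fin _) = i from Fin.ext (hj.symm.trans (hblock i u hi))]
    rw [hlocal.1 u hout, (UsubN_actsLocallyOn _ _ _ (α ℓ (j + 1))).1 v u hu]

theorem cos_atan2_mul_sqrt (a b : ℝ) : Real.cos (atan2 b a) * √(a ^ 2 + b ^ 2) = a := by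
  rw [atan2, ← Complex.norm_add_mul_I, mul_comm, Complex.norm_mul_cos_arg]
  simp

theorem sin_atan2_mul_sqrt (a b : ℝ) : Real.sin (atan2 b a) * √(a ^ 2 + b ^ 2) = b := by
  rw [atan2, ← Complex.norm_add_mul_I, mul_comm, Complex.norm_mul_sin_arg]
  simp

section SubtreeNorms

variable {L : ℕ} (c : Fin (2 ^ L) → ℂ)

theorem rnorm_nonneg (ℓ i : ℕ) : 0 ≤ rnorm L c ℓ i := Real.sqrt_nonneg _

theorem rnorm_sq (ℓ i : ℕ) :
    rnorm L c ℓ i ^ 2 = ∑ n : Fin (2 ^ L),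
      if (i - 1) * 2 ^ (L + 1 - ℓ) ≤ (n : ℕ) ∧ (n : ℕ) < i * 2 ^ (L + 1 - ℓ)
      then ‖c n‖ ^ 2 else 0 :=
  Real.sq_sqrt (Finset.sum_nonneg fun _ _ => by positivity)

theorem rnorm_sq_eq_add {ℓ : ℕ} (hℓ : ℓ ≤ L) (j : ℕ) :
    rnorm L c ℓ (j + 1) ^ 2 =
      rnorm L c (ℓ + 1) (2 * j + 1) ^ 2 + rnorm L c (ℓ + 1) (2 * j + 2) ^ 2 := by
  simp only [rnorm_sq, ← Finset.sum_add_distrib, two_pow_add_one_sub hℓ, Nat.add_sub_add_right,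
    Nat.add_sub_cancel, show 2 * j + 2 - 1 = 2 * j + 1 by omega]
  refine Finset.sum_congr rfl fun n _ => ?_
  have : (j + 1) * (2 * 2 ^ (L - ℓ)) = 2 * j * 2 ^ (L - ℓ) + 2 * 2 ^ (L - ℓ) := by ring
  have : (2 * j + 1) * 2 ^ (L - ℓ) = 2 * j * 2 ^ (L - ℓ) + 2 ^ (L - ℓ) := by ring
  have : (2 * j + 2) * 2 ^ (L - ℓ) = 2 * j * 2 ^ (L - ℓ) + 2 * 2 ^ (L - ℓ) := by ring
  have : j * (2 * 2 ^ (L - ℓ)) = 2 * j * 2 ^ (L - ℓ) := by ring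
  split_ifs <;> first | omega | simp

theorem cos_sin_splitAngle_mul_rnorm {ℓ : ℕ} (hℓ : ℓ ≤ L) (j : ℕ) :
    Real.cos (splitAngle L c ℓ (j + 1)) * rnorm L c ℓ (j + 1) = rnorm L c (ℓ + 1) (2 * j + 1) ∧
      Real.sin (splitAngle L c ℓ (j + 1)) * rnorm L c ℓ (j + 1) =
        rnorm L c (ℓ + 1) (2 * j + 2) := by
  set a := rnorm L c (ℓ + 1) (2 * j + 1)
  set b := rnorm L c (ℓ + 1) (2 * j + 2)
  have hr : rnorm L c ℓ (j + 1) = √(a ^ 2 + b ^ 2) := by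
    rw [← rnorm_sq_eq_add c hℓ, Real.sqrt_sq (rnorm_nonneg c _ _)]
  rw [splitAngle, show 2 * (j + 1) = 2 * j + 2 by ring, show 2 * j + 2 - 1 = 2 * j + 1 by omega]
  split_ifs with h0
  · have ha := rnorm_nonneg c (ℓ + 1) (2 * j + 1)
    have hb := rnorm_nonneg c (ℓ + 1) (2 * j + 2)
    have hsq : a ^ 2 + b ^ 2 = 0 := by rw [← Real.sqrt_eq_zero (by positivity), ← hr, h0]
    rw [h0, mul_zero, mul_zero]
    constructor <;> nlinarith
  · rw [hr]
    exact ⟨cos_atan2_mul_sqrt a b, sin_atan2_mul_sqrt a b⟩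

end SubtreeNorms

theorem digits_two_sum_add_two_mul {b : ℕ} (hb : b < 2) (j : ℕ) :
    (Nat.digits 2 (b + 2 * j)).sum = b + (Nat.digits 2 j).sum := by
  rcases eq_or_ne b 0 with rfl | hb0
  · rcases eq_or_ne j 0 with rfl | hj0
    · simp
    · rw [Nat.digits_add 2 one_lt_two 0 j hb (Or.inr hj0), List.sum_cons]
  · rw [Nat.digits_add 2 one_lt_two b j hb (Or.inl hb0), List.sum_cons]

section PartialState

variable {L : ℕ} (c : Fin (2 ^ L) → ℂ)

noncomputable def partialState (t : ℕ) : Fin (2 ^ L) → ℂ := fun n =>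
  if 2 ^ (L - t) ∣ (n : ℕ) then
    I ^ (Nat.digits 2 ((n : ℕ) / 2 ^ (L - t))).sum *
      rnorm L c (t + 1) ((n : ℕ) / 2 ^ (L - t) + 1)
  else 0

theorem partialState_apply_of_eq_mul {t k : ℕ} {n : Fin (2 ^ L)}
    (hn : (n : ℕ) = k * 2 ^ (L - t)) :
    partialState c t n = I ^ (Nat.digits 2 k).sum * rnorm L c (t + 1) (k + 1) := by
  rw [partialState, if_pos ⟨k, by rw [hn, mul_comm]⟩, hn, Nat.mul_div_cancel _ (by positivity)]

theorem partialState_apply_of_not_dvd {t : ℕ} {n : Fin (2 ^ L)} (hn : ¬2 ^ (L - t) ∣ (n : ℕ)) :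
    partialState c t n = 0 :=
  if_neg hn

theorem partialState_zero (hc : ∑ n, ‖c n‖ ^ 2 = 1) : partialState c 0 = e1 (2 ^ L) := by
  have hroot : rnorm L c 1 1 = 1 := by
    simp only [rnorm, Nat.sub_self, zero_mul, zero_le, true_and, one_mul, Nat.add_sub_cancel,
      Fin.is_lt, if_true, hc, Real.sqrt_one]
  funext n
  rcases eq_or_ne (n : ℕ) 0 with hn | hn
  · rw [partialState_apply_of_eq_mul c (k := 0) (by rw [hn, zero_mul]), e1, if_pos hn, hroot]
    simp
  · rw [partialState_apply_of_not_dvd c fun h => hn ?_, e1, if_neg hn]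
    exact Nat.eq_zero_of_dvd_of_lt h (by simp)

theorem partialState_self (n : Fin (2 ^ L)) :
    partialState c L n = I ^ (Nat.digits 2 n).sum * ‖c n‖ := by
  rw [partialState_apply_of_eq_mul c (k := n) (by simp)]
  congr
  rw [rnorm, Nat.sub_self, pow_zero, Fintype.sum_eq_single n fun m hm => if_neg ?_]
  · simp
  · simp only [Nat.add_sub_cancel, mul_one, not_and, not_lt]
    intro h
    exact Nat.lt_of_le_of_ne h fun h' => hm (Fin.ext h'.symm)

theorem partialState_pred_apply_of_eq_pIdx {ℓ j : ℕ} (h1 : 1 ≤ ℓ) {n : Fin (2 ^ L)}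
    (hn : (n : ℕ) = pIdx L ℓ (j + 1)) :
    partialState c (ℓ - 1) n = I ^ (Nat.digits 2 j).sum * rnorm L c ℓ (j + 1) := by
  rw [partialState_apply_of_eq_mul c (k := j) (by rw [hn, pIdx_succ, Nat.sub_sub_right _ h1]),
    Nat.sub_add_cancel h1]

theorem partialState_pred_apply_of_eq_qIdx {ℓ j : ℕ} (h1 : 1 ≤ ℓ) (h2 : ℓ ≤ L) {n : Fin (2 ^ L)}
    (hn : (n : ℕ) = qIdx L ℓ (j + 1)) : partialState c (ℓ - 1) n = 0 := by
  refine partialState_apply_of_not_dvd c ?_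
  rw [hn, qIdx_succ, Nat.sub_sub_right _ h1, Nat.dvd_add_right (dvd_mul_left _ _),
    two_pow_add_one_sub h2]
  exact Nat.not_dvd_of_pos_of_lt (by positivity) (by simp)

theorem layerU_mulVec_partialState_apply_of_eq_mul {ℓ j b : ℕ} (h1 : 1 ≤ ℓ) (h2 : ℓ ≤ L)
    (hb : b < 2) {u : Fin (2 ^ L)} (hu : (u : ℕ) = (b + 2 * j) * 2 ^ (L - ℓ)) :
    (layerU L (splitAngle L c) ℓ *ᵥ partialState c (ℓ - 1)) u = partialState c ℓ u := by
  have hj : (u : ℕ) / 2 ^ (L + 1 - ℓ) = j := by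
    rw [two_pow_add_one_sub h2]
    refine div_eq_of_eq_mul_or_eq_mul_add (by positivity) ?_
    interval_cases b
    · exact Or.inl (by rw [hu]; ring)
    · exact Or.inr (by rw [hu]; ring)
  have hjlt := hj ▸ div_two_pow_lt h1 h2 u
  let p : Fin (2 ^ L) := ⟨pIdx L ℓ (j + 1), (pIdx_lt_qIdx ..).trans (qIdx_lt_two_pow h1 h2 hjlt)⟩
  let q : Fin (2 ^ L) := ⟨qIdx L ℓ (j + 1), qIdx_lt_two_pow h1 h2 hjlt⟩
  have hpq := (pIdx_lt_qIdx L ℓ (j + 1)).ne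
  have hp := partialState_pred_apply_of_eq_pIdx c h1 (n := p) rfl
  have hq := partialState_pred_apply_of_eq_qIdx c h1 h2 (n := q) rfl
  obtain ⟨hcos, hsin⟩ := cos_sin_splitAngle_mul_rnorm c h2 j
  rw [layerU_mulVec_apply h1 h2 _ _ hj, partialState_apply_of_eq_mul c hu,
    digits_two_sum_add_two_mul hb]
  interval_cases b
  · have hup : u = p := Fin.ext <| show (u : ℕ) = pIdx L ℓ (j + 1) by
      rw [hu, pIdx_succ, two_pow_add_one_sub h2]; ring
    rw [UsubN_mulVec_apply_left hpq _ _ (hup ▸ rfl) (w := q) rfl, hup, hp, hq, zero_add, zero_add,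
      ← hcos]
    push_cast
    ring
  · have huq : u = q := Fin.ext <| show (u : ℕ) = qIdx L ℓ (j + 1) by
      rw [hu, qIdx_succ, two_pow_add_one_sub h2]; ring
    rw [UsubN_mulVec_apply_right hpq _ _ (huq ▸ rfl) (w := p) rfl, huq, hp, hq,
      show 1 + 2 * j + 1 = 2 * j + 2 by ring, ← hsin]
    push_cast
    ring

theorem layerU_mulVec_partialState_apply_of_not_dvd {ℓ : ℕ} (h1 : 1 ≤ ℓ) (h2 : ℓ ≤ L)
    {u : Fin (2 ^ L)} (hu : ¬2 ^ (L - ℓ) ∣ (u : ℕ)) :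
    (layerU L (splitAngle L c) ℓ *ᵥ partialState c (ℓ - 1)) u = partialState c ℓ u := by
  have hpq : u ∉ {u : Fin (2 ^ L) | (u : ℕ) = pIdx L ℓ (↑u / 2 ^ (L + 1 - ℓ) + 1) ∨
      (u : ℕ) = qIdx L ℓ (↑u / 2 ^ (L + 1 - ℓ) + 1)} := by
    rintro (h | h)
    · exact hu (h ▸ two_pow_dvd_pIdx h2 _)
    · exact hu (h ▸ two_pow_dvd_qIdx h2 _)
  rw [layerU_mulVec_apply h1 h2 _ _ rfl, (UsubN_actsLocallyOn _ _ _ _).1 _ u hpq,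
    partialState_apply_of_not_dvd c hu, partialState_apply_of_not_dvd c]
  rw [Nat.sub_sub_right _ h1, two_pow_add_one_sub h2]
  exact fun h => hu ((dvd_mul_left _ 2).trans h)

theorem layerU_mulVec_partialState {ℓ : ℕ} (h1 : 1 ≤ ℓ) (h2 : ℓ ≤ L) :
    layerU L (splitAngle L c) ℓ *ᵥ partialState c (ℓ - 1) = partialState c ℓ := by
  funext u
  by_cases hdvd : 2 ^ (L - ℓ) ∣ (u : ℕ)
  · obtain ⟨k, hk⟩ := hdvd
    exact layerU_mulVec_partialState_apply_of_eq_mul c h1 h2 (Nat.mod_lt k two_pos)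
      (by rw [hk, Nat.mod_add_div, mul_comm])
  · exact layerU_mulVec_partialState_apply_of_not_dvd c h1 h2 hdvd

theorem ofFn_layerU_prod_mulVec_partialState {t : ℕ} (ht : t ≤ L) :
    (List.ofFn fun ℓ : Fin t => layerU L (splitAngle L c) (t - ℓ)).prod *ᵥ partialState c 0 =
      partialState c t := by
  induction t with
  | zero => simp
  | succ t ih =>
    rw [List.ofFn_succ, List.prod_cons, ← Matrix.mulVec_mulVec]
    simp only [Fin.val_zero, Nat.sub_zero, Fin.val_succ, Nat.add_sub_add_right]
    rw [ih (by omega)]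
    exact layerU_mulVec_partialState c (by omega) ht

end PartialState

theorem exp_mul_I_arg_sub_mul_I_pow_mul_norm (z : ℂ) (w : ℕ) :
    exp (I * ↑(z.arg - Real.pi / 2 * w)) * (I ^ w * ‖z‖) = z := by
  have hI : I ^ w = exp (w * (Real.pi / 2 * I)) := by
    rw [Complex.exp_nat_mul, Complex.exp_pi_div_two_mul_I]
  rw [hI]
  calc exp (I * ↑(z.arg - Real.pi / 2 * w)) * (exp (w * (Real.pi / 2 * I)) * ‖z‖)
      = ‖z‖ * exp (z.arg * I) := by
        rw [← mul_assoc, ← Complex.exp_add, mul_comm]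
        congr 2
        push_cast
        ring
    _ = z := Complex.norm_mul_exp_arg_mul_I z

theorem exact_state_preparation_general (L : ℕ) (c : Fin (2 ^ L) → ℂ)
    (hc : ∑ n, ‖c n‖ ^ 2 = 1) :
    ∀ n : Fin (2 ^ L),
      Complex.exp (Complex.I * (phaseChoice L c n : ℝ)) *
        (Vmag L (splitAngle L c)).mulVec (e1 (2 ^ L)) n = c n := by
  intro n
  rw [Vmag, ← partialState_zero c hc, ofFn_layerU_prod_mulVec_partialState c le_rfl,
    partialState_self, phaseChoice]
  exact exp_mul_I_arg_sub_mul_I_pow_mul_norm (c n) _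

theorem exact_state_preparation (L : ℕ) (hL : 1 ≤ L) (c : Fin (2 ^ L) → ℂ)
    (hc : ∑ n, ‖c n‖ ^ 2 = 1) :
    ∀ n : Fin (2 ^ L),
      Complex.exp (Complex.I * (phaseChoice L c n : ℝ)) *
        (Vmag L (splitAngle L c)).mulVec (e1 (2 ^ L)) n = c n :=
  exact_state_preparation_general L c hc
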